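/- Let ℓ : ℝ^n → ℝ be differentiable, θ₀ ∈ ℝ^n, ρ > 0, and let g₁, …, g_m ∈ ℝ^n be nonzero vectors. Define Θ : (0, ∞) → ℝ^n by Θ(C) = θ₀ − (ρ/m)·Σ_{i=1}^m g_i / max(1, ‖g_i‖₂/C). Then for every C > 0 with C ≠ ‖g_i‖₂ for all i, the function C ↦ ℓ(Θ(C)) is differentiable at C with derivative d/dC ℓ(Θ(C)) = −ρ·⟨∇ℓ(Θ(C)), (1/m)·Σ_{i : ‖g_i‖₂ > C} g_i/‖g_i‖₂⟩. -/

import Mathlib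

open RealInnerProductSpace

/-!
Each clipping factor `(max 1 (a / c))⁻¹` equals `c / a` for `c < a` and `1` for `c > a`, so away
from the norms `‖gᵢ‖` the update `Θ` is locally affine in the threshold `c`: actively clipped
samples contribute their unit directions to `Θ'`, the others nothing. The chain rule through the
gradient of `ℓ` then gives the derivative.
-/

theorem HasGradientAt.comp_hasDerivAt {F : Type*} [NormedAddCommGroup F] [InnerProductSpace ℝ F]
    [CompleteSpace F] {f : F → ℝ} {f' : F} {γ : ℝ → F} {γ' : F} {t : ℝ}
    (hf : HasGradientAt f f' (γ t)) (hγ : HasDerivAt γ γ' t) :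
    HasDerivAt (fun s => f (γ s)) ⟪f', γ'⟫ t :=
  hf.hasFDerivAt.comp_hasDerivAt t hγ

theorem hasDerivAt_inv_max_one_div {a c : ℝ} (hc : 0 < c) (hca : c ≠ a) :
    HasDerivAt (fun x => (max 1 (a / x))⁻¹) (if c < a then a⁻¹ else 0) c := by
  rcases hca.lt_or_gt with hlt | hgt
  · rw [if_pos hlt]
    have hclip : ∀ᶠ x in nhds c, (max 1 (a / x))⁻¹ = x * a⁻¹ := by
      filter_upwards [Ioo_mem_nhds hc hlt] with x ⟨hx, hxa⟩
      rw [max_eq_right ((one_le_div hx).mpr hxa.le), inv_div, div_eq_mul_inv]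
    simpa using ((hasDerivAt_id c).mul_const a⁻¹).congr_of_eventuallyEq hclip
  · rw [if_neg hgt.not_gt]
    have hunclipped : ∀ᶠ x in nhds c, (max 1 (a / x))⁻¹ = 1 := by
      filter_upwards [Ioi_mem_nhds hgt, Ioi_mem_nhds hc] with x hax hx
      rw [max_eq_left ((div_lt_one hx).mpr hax).le, inv_one]
    exact (hasDerivAt_const c 1).congr_of_eventuallyEq hunclipped

theorem hasDerivAt_sum_clipped {ι E : Type*} [Fintype ι] [NormedAddCommGroup E]
    [NormedSpace ℝ E] (g : ι → E) {c : ℝ} (hc : 0 < c) (hcg : ∀ i, c ≠ ‖g i‖) :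
    HasDerivAt (fun x => ∑ i, (max 1 (‖g i‖ / x))⁻¹ • g i)
      (∑ i ∈ Finset.univ.filter (fun i => c < ‖g i‖), ‖g i‖⁻¹ • g i) c := by
  rw [Finset.sum_filter]
  refine HasDerivAt.fun_sum fun i _ => ?_
  convert (hasDerivAt_inv_max_one_div hc (hcg i)).smul_const (g i) using 1
  split_ifs <;> simp

theorem stmt8_general (n m : ℕ) (ℓ : EuclideanSpace ℝ (Fin n) → ℝ)
    (hℓ : Differentiable ℝ ℓ) (θ₀ : EuclideanSpace ℝ (Fin n))
    (ρ : ℝ) (g : Fin m → EuclideanSpace ℝ (Fin n))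
    (Θ : ℝ → EuclideanSpace ℝ (Fin n))
    (hΘ : ∀ C, Θ C = θ₀ - (ρ / m) • ∑ i, (max 1 (‖g i‖ / C))⁻¹ • g i)
    (C : ℝ) (hC : 0 < C) (hCne : ∀ i, C ≠ ‖g i‖) :
    HasDerivAt (fun C => ℓ (Θ C))
      (-ρ * ⟪gradient ℓ (Θ C),
        (m : ℝ)⁻¹ • ∑ i ∈ Finset.univ.filter (fun i => C < ‖g i‖),
          ‖g i‖⁻¹ • g i⟫) C := by
  have hΘ_deriv := ((hasDerivAt_sum_clipped g hC hCne).const_smul (ρ / m)).const_sub θ₀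
  simp only [Pi.smul_apply, ← hΘ] at hΘ_deriv
  convert (hℓ (Θ C)).hasGradientAt.comp_hasDerivAt hΘ_deriv using 1
  rw [inner_neg_right, inner_smul_right, inner_smul_right, div_eq_mul_inv]
  ring

/-- Chain-rule derivative of the post-update cost w.r.t. the clipping
threshold (Equations 8–12 of the paper): with
`Θ(C) = θ₀ − (ρ/m)·Σᵢ gᵢ/max(1, ‖gᵢ‖₂/C)`, at every `C > 0` avoiding the
norms `‖gᵢ‖₂`, the map `C ↦ ℓ(Θ(C))` is differentiable with derivative
`−ρ·⟨∇ℓ(Θ(C)), (1/m)·Σ_{i : ‖gᵢ‖₂ > C} gᵢ/‖gᵢ‖₂⟩`. -/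
theorem stmt8 (n m : ℕ) (ℓ : EuclideanSpace ℝ (Fin n) → ℝ)
    (hℓ : Differentiable ℝ ℓ) (θ₀ : EuclideanSpace ℝ (Fin n))
    (ρ : ℝ) (hρ : 0 < ρ) (g : Fin m → EuclideanSpace ℝ (Fin n))
    (hg : ∀ i, g i ≠ 0)
    (Θ : ℝ → EuclideanSpace ℝ (Fin n))
    (hΘ : ∀ C, Θ C = θ₀ - (ρ / m) • ∑ i, (max 1 (‖g i‖ / C))⁻¹ • g i)
    (C : ℝ) (hC : 0 < C) (hCne : ∀ i, C ≠ ‖g i‖) :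
    HasDerivAt (fun C => ℓ (Θ C))
      (-ρ * ⟪gradient ℓ (Θ C),
        (m : ℝ)⁻¹ • ∑ i ∈ Finset.univ.filter (fun i => C < ‖g i‖),
          ‖g i‖⁻¹ • g i⟫) C :=
  stmt8_general n m ℓ hℓ θ₀ ρ g Θ hΘ C hC hCne
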